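/- Let p : 2^V → ℤ be skew-supermodular and (H = (V, E), w) a weighted hypergraph such that every hyperedge is contained in some (p, H, w)-tight set, b_{(H,w)}({u}) ≠ 0 for all u ∈ V, b_{(H,w)}(X) ≥ p(X) for all X ⊆ V, and p is symmetric. Let e, f ∈ E be hyperedges whose maximal (p, H, w)-tight sets are distinct. Then e ∩ f = ∅ and e ∪ f ∉ E. -/

import Mathlib

/-- Coverage function of a weighted hypergraph. -/
def coverage {V : Type*} [DecidableEq V] (E : Finset (Finset V)) (w : Finset V → ℕ)
    (X : Finset V) : ℤ :=
  ∑ e ∈ E.filter (fun e => (e ∩ X).Nonempty), (w e : ℤ)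

/-- Skew-supermodularity. -/
def SkewSupermodular {V : Type*} [DecidableEq V] (p : Finset V → ℤ) : Prop :=
  ∀ X Y : Finset V, p X + p Y ≤ p (X ∩ Y) + p (X ∪ Y) ∨
    p X + p Y ≤ p (X \ Y) + p (Y \ X)

/-! Coverage functions are monotone and submodular. If maximal tight sets `Me ⊇ e` and `Mf` met
inside `e`, skew-supermodularity of `p` would either make `Me ∪ Mf` tight (by submodularity of the
coverage), contradicting maximality, or give `b(Me) + b(Mf) ≤ b(Me \ Mf) + b(Mf \ Me)`, which is
impossible because `e` counts in `b(Mf)` but not in `b(Mf \ Me)`. A hyperedge `e ∪ f` would lie in a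
single maximal tight set containing both `e` and `f`. -/

section Coverage

variable {V : Type*} [DecidableEq V] (E : Finset (Finset V)) (w : Finset V → ℕ)

theorem coverage_mono {X Y : Finset V} (hXY : X ⊆ Y) : coverage E w X ≤ coverage E w Y :=
  Finset.sum_le_sum_of_subset_of_nonneg
    (Finset.monotone_filter_right E fun _ _ hg => hg.mono (Finset.inter_subset_inter_left hXY))
    fun _ _ _ => Int.natCast_nonneg _

theorem coverage_lt_coverage_of_subset {X Y g : Finset V} (hXY : X ⊆ Y) (hg : g ∈ E)
    (hwg : 0 < w g) (hgY : (g ∩ Y).Nonempty) (hgX : Disjoint g X) :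
    coverage E w X < coverage E w Y :=
  Finset.sum_lt_sum_of_subset
    (Finset.monotone_filter_right E fun _ _ hg => hg.mono (Finset.inter_subset_inter_left hXY))
    (i := g) (Finset.mem_filter.2 ⟨hg, hgY⟩)
    (fun h => (Finset.mem_filter.1 h).2.ne_empty (Finset.disjoint_iff_inter_eq_empty.1 hgX))
    (by exact_mod_cast hwg) fun _ _ _ => Int.natCast_nonneg _

theorem coverage_inter_add_coverage_union_le (X Y : Finset V) :
    coverage E w (X ∩ Y) + coverage E w (X ∪ Y) ≤ coverage E w X + coverage E w Y := by
  have hunion : E.filter (fun g => (g ∩ (X ∪ Y)).Nonempty) =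
      E.filter (fun g => (g ∩ X).Nonempty) ∪ E.filter (fun g => (g ∩ Y).Nonempty) := by
    simp only [Finset.inter_union_distrib_left, Finset.union_nonempty, Finset.filter_or]
  have hinter : E.filter (fun g => (g ∩ (X ∩ Y)).Nonempty) ⊆
      E.filter (fun g => (g ∩ X).Nonempty) ∩ E.filter (fun g => (g ∩ Y).Nonempty) := by
    rw [← Finset.filter_and]
    exact Finset.monotone_filter_right E fun _ _ hg =>
      ⟨hg.mono (Finset.inter_subset_inter_left Finset.inter_subset_left),
        hg.mono (Finset.inter_subset_inter_left Finset.inter_subset_right)⟩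
  have hsum := Finset.sum_union_inter (s₁ := E.filter (fun g => (g ∩ X).Nonempty))
    (s₂ := E.filter (fun g => (g ∩ Y).Nonempty)) (f := fun g => (w g : ℤ))
  have hle := Finset.sum_le_sum_of_subset_of_nonneg (f := fun g => (w g : ℤ)) hinter
    fun _ _ _ => Int.natCast_nonneg _
  unfold coverage
  rw [hunion]
  linarith

end Coverage

section TightSets

variable {V : Type*} [DecidableEq V] {E : Finset (Finset V)} {w : Finset V → ℕ}
  {p : Finset V → ℤ} {X Y : Finset V}

theorem tight_union_of_tight (hcover : ∀ Z, p Z ≤ coverage E w Z)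
    (hX : coverage E w X = p X) (hY : coverage E w Y = p Y)
    (hsup : p X + p Y ≤ p (X ∩ Y) + p (X ∪ Y)) :
    coverage E w (X ∪ Y) = p (X ∪ Y) := by
  have := coverage_inter_add_coverage_union_le E w X Y
  linarith [hcover (X ∩ Y), hcover (X ∪ Y)]

theorem sdiff_add_sdiff_lt_of_tight (hcover : ∀ Z, p Z ≤ coverage E w Z)
    (hX : coverage E w X = p X) (hY : coverage E w Y = p Y) {e : Finset V} (he : e ∈ E)
    (hwe : 0 < w e) (heX : e ⊆ X) (heY : (e ∩ Y).Nonempty) :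
    p (X \ Y) + p (Y \ X) < p X + p Y := by
  have hXY := coverage_mono E w (Finset.sdiff_subset (s := X) (t := Y))
  have hYX := coverage_lt_coverage_of_subset E w Finset.sdiff_subset he hwe heY
    (Finset.disjoint_sdiff.mono_left heX)
  linarith [hcover (X \ Y), hcover (Y \ X)]

theorem tight_union_of_tight_of_edge_meets (hp : SkewSupermodular p)
    (hcover : ∀ Z, p Z ≤ coverage E w Z)
    (hX : coverage E w X = p X) (hY : coverage E w Y = p Y) {e : Finset V} (he : e ∈ E)
    (hwe : 0 < w e) (heX : e ⊆ X) (heY : (e ∩ Y).Nonempty) :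
    coverage E w (X ∪ Y) = p (X ∪ Y) := by
  rcases hp X Y with hsup | hsup
  · exact tight_union_of_tight hcover hX hY hsup
  · exact absurd hsup (sdiff_add_sdiff_lt_of_tight hcover hX hY he hwe heX heY).not_ge

theorem exists_maximal_tight_superset [Finite V] {g : Finset V} (hgX : g ⊆ X)
    (hX : coverage E w X = p X) :
    ∃ M : Finset V, g ⊆ M ∧ coverage E w M = p M ∧
      ∀ M' : Finset V, coverage E w M' = p M' → M ⊆ M' → M = M' := by
  obtain ⟨M, -, ⟨hgM, hM⟩, hmax⟩ :=
    Finite.exists_le_maximal (p := fun M => g ⊆ M ∧ coverage E w M = p M) ⟨hgX, hX⟩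
  exact ⟨M, hgM, hM, fun M' hM' hMM' =>
    le_antisymm hMM' (hmax ⟨hgM.trans hMM', hM'⟩ hMM')⟩

theorem maximal_tight_eq_of_edge_meets (hp : SkewSupermodular p)
    (hcover : ∀ Z, p Z ≤ coverage E w Z)
    (hX : coverage E w X = p X) (hXmax : ∀ M', coverage E w M' = p M' → X ⊆ M' → X = M')
    (hY : coverage E w Y = p Y) (hYmax : ∀ M', coverage E w M' = p M' → Y ⊆ M' → Y = M')
    {e : Finset V} (he : e ∈ E) (hwe : 0 < w e) (heX : e ⊆ X) (heY : (e ∩ Y).Nonempty) :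
    X = Y := by
  have hXY := tight_union_of_tight_of_edge_meets hp hcover hX hY he hwe heX heY
  exact (hXmax _ hXY Finset.subset_union_left).trans
    (hYmax _ hXY Finset.subset_union_right).symm

end TightSets

theorem chosen_hyperedges_disjoint_and_union_not_edge_general {V : Type*} [Fintype V]
    [DecidableEq V]
    (E : Finset (Finset V)) (w : Finset V → ℕ) (p : Finset V → ℤ)
    (hw : ∀ e ∈ E, 0 < w e)
    (hp : SkewSupermodular p)
    (hcover : ∀ Z : Finset V, p Z ≤ coverage E w Z)
    (htight : ∀ e ∈ E, ∃ X : Finset V, e ⊆ X ∧ coverage E w X = p X)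
    (e f : Finset V) (he : e ∈ E) (hf : f ∈ E)
    (hdistinct : ∀ Me Mf : Finset V,
      (e ⊆ Me ∧ coverage E w Me = p Me ∧
        ∀ M' : Finset V, coverage E w M' = p M' → Me ⊆ M' → Me = M') →
      (f ⊆ Mf ∧ coverage E w Mf = p Mf ∧
        ∀ M' : Finset V, coverage E w M' = p M' → Mf ⊆ M' → Mf = M') →
      Me ≠ Mf) :
    e ∩ f = ∅ ∧ e ∪ f ∉ E := by
  have hmax : ∀ g ∈ E, ∃ M : Finset V, g ⊆ M ∧ coverage E w M = p M ∧
      ∀ M' : Finset V, coverage E w M' = p M' → M ⊆ M' → M = M' := fun g hg =>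
    let ⟨_, hgX, hX⟩ := htight g hg
    exists_maximal_tight_superset hgX hX
  obtain ⟨Me, heMe, hMe, hMemax⟩ := hmax e he
  obtain ⟨Mf, hfMf, hMf, hMfmax⟩ := hmax f hf
  refine ⟨?_, fun hef => ?_⟩
  · by_contra hne
    obtain ⟨x, hx⟩ := Finset.nonempty_iff_ne_empty.2 hne
    have hxe := (Finset.mem_inter.1 hx).1
    have hxf := (Finset.mem_inter.1 hx).2
    exact hdistinct Me Mf ⟨heMe, hMe, hMemax⟩ ⟨hfMf, hMf, hMfmax⟩
      (maximal_tight_eq_of_edge_meets hp hcover hMe hMemax hMf hMfmax he (hw e he) heMe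
        ⟨x, Finset.mem_inter.2 ⟨hxe, hfMf hxf⟩⟩)
  · obtain ⟨M, hefM, hM, hMmax⟩ := hmax (e ∪ f) hef
    exact hdistinct M M ⟨Finset.subset_union_left.trans hefM, hM, hMmax⟩
      ⟨Finset.subset_union_right.trans hefM, hM, hMmax⟩ rfl

/-- Hyperedges `e`, `f` whose maximal tight sets are distinct are disjoint, and
their union is not a hyperedge. -/
theorem chosen_hyperedges_disjoint_and_union_not_edge {V : Type*} [Fintype V]
    [DecidableEq V]
    (E : Finset (Finset V)) (w : Finset V → ℕ) (p : Finset V → ℤ)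
    (hw : ∀ e ∈ E, 0 < w e)
    (hsym : ∀ X : Finset V, p X = p Xᶜ)
    (hp : SkewSupermodular p)
    (hcover : ∀ Z : Finset V, p Z ≤ coverage E w Z)
    (htight : ∀ e ∈ E, ∃ X : Finset V, e ⊆ X ∧ coverage E w X = p X)
    (hdeg : ∀ u : V, coverage E w {u} ≠ 0)
    (e f : Finset V) (he : e ∈ E) (hf : f ∈ E)
    (hdistinct : ∀ Me Mf : Finset V,
      (e ⊆ Me ∧ coverage E w Me = p Me ∧
        ∀ M' : Finset V, coverage E w M' = p M' → Me ⊆ M' → Me = M') →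
      (f ⊆ Mf ∧ coverage E w Mf = p Mf ∧
        ∀ M' : Finset V, coverage E w M' = p M' → Mf ⊆ M' → Mf = M') →
      Me ≠ Mf) :
    e ∩ f = ∅ ∧ e ∪ f ∉ E :=
  chosen_hyperedges_disjoint_and_union_not_edge_general E w p hw hp hcover htight e f he hf
    hdistinct
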